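/- Let P be a partial order on [m] and L = J(P) the natural distributive lattice of its order ideals, and let K be a field. Then the kernel of the K-algebra homomorphism φ_L : K[p_S : S ∈ L] → K[t, b_1, …, b_m], p_S ↦ t · ∏_{i∈S} b_i, equals the Hibi ideal I_L = ⟨ p_S p_T − p_{S∩T} p_{S∪T} : S, T ∈ L ⟩. -/

import Mathlib

open scoped BigOperators
attribute [local instance] Classical.propDecidable

noncomputable section

open MvPolynomial

/-- The order ideals of a partial order `P` on `Fin m`. -/
def orderIdeals {m : ℕ} (P : PartialOrder (Fin m)) : Set (Finset (Fin m)) :=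
  {S | ∀ t ∈ S, ∀ s, P.le s t → s ∈ S}

/-- `i` covers `j` in the partial order `P`. -/
def Covers {m : ℕ} (P : PartialOrder (Fin m)) (i j : Fin m) : Prop :=
  P.lt j i ∧ ∀ r, ¬ (P.lt j r ∧ P.lt r i)

/-- The minimal graph of a natural lattice `L = J(P)`: edges are the cover relations of `P`. -/
def minimalGraph {m : ℕ} (P : PartialOrder (Fin m)) : SimpleGraph (Fin m) where
  Adj i j := Covers P i j ∨ Covers P j i
  symm := by constructor; intro i j h; tauto
  loopless := by
    constructor
    intro i h
    rcases h with h | h <;>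
      exact ((P.lt_iff_le_not_ge i i).mp h.1).2 ((P.lt_iff_le_not_ge i i).mp h.1).1

/-- The comparability graph of `P`: distinct comparable elements are adjacent. -/
def compGraph {m : ℕ} (P : PartialOrder (Fin m)) : SimpleGraph (Fin m) where
  Adj i j := P.lt i j ∨ P.lt j i
  symm := by constructor; intro i j h; tauto
  loopless := by
    constructor
    intro i h
    rcases h with h | h <;>
      exact ((P.lt_iff_le_not_ge i i).mp h).2 ((P.lt_iff_le_not_ge i i).mp h).1

/-- The cliques of `G` (including the empty clique). -/
abbrev Cliques {m : ℕ} (G : SimpleGraph (Fin m)) : Type :=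
  {C : Finset (Fin m) // G.IsClique (C : Set (Fin m))}

/-- The alternative parametrization `ψ_G` restricted to the lattice `L = J(P)`:
`p_T ↦ ∏_{C clique of G, C ⊆ T} c_C`. -/
def altParamL {m : ℕ} (P : PartialOrder (Fin m)) (G : SimpleGraph (Fin m))
    (K : Type*) [CommRing K] :
    MvPolynomial (↥(orderIdeals P)) K →ₐ[K] MvPolynomial (Cliques G) K :=
  aeval (fun S : ↥(orderIdeals P) =>
    ∏ C ∈ Finset.univ.filter
        (fun C : Cliques G => (C.1 : Finset (Fin m)) ⊆ (S : Finset (Fin m))),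
      (X C : MvPolynomial (Cliques G) K))

/-- The Hibi parametrization `φ_L`: `p_S ↦ t · ∏_{i ∈ S} b_i`, where `t` is the variable
`X none` and `b_i` is the variable `X (some i)`. -/
def hibiParam {m : ℕ} (P : PartialOrder (Fin m)) (K : Type*) [CommRing K] :
    MvPolynomial (↥(orderIdeals P)) K →ₐ[K] MvPolynomial (Option (Fin m)) K :=
  aeval (fun S : ↥(orderIdeals P) =>
    (X none : MvPolynomial (Option (Fin m)) K) *
      ∏ i ∈ (S : Finset (Fin m)), X (some i))

lemma orderIdeals_inter_mem {m : ℕ} (P : PartialOrder (Fin m))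
    {S T : Finset (Fin m)} (hS : S ∈ orderIdeals P) (hT : T ∈ orderIdeals P) :
    S ∩ T ∈ orderIdeals P := by
  intro t ht s hst
  rw [Finset.mem_inter] at ht ⊢
  exact ⟨hS t ht.1 s hst, hT t ht.2 s hst⟩

lemma orderIdeals_union_mem {m : ℕ} (P : PartialOrder (Fin m))
    {S T : Finset (Fin m)} (hS : S ∈ orderIdeals P) (hT : T ∈ orderIdeals P) :
    S ∪ T ∈ orderIdeals P := by
  intro t ht s hst
  rw [Finset.mem_union] at ht ⊢
  rcases ht with ht | ht
  · exact Or.inl (hS t ht s hst)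
  · exact Or.inr (hT t ht s hst)

namespace HibiAux

variable {m : ℕ} {P : PartialOrder (Fin m)}

/-- exponent vector of `φ(X_S)`. -/
def W {m : ℕ} (S : Finset (Fin m)) : Option (Fin m) →₀ ℕ :=
  Finsupp.single none 1 + ∑ i ∈ S, Finsupp.single (some i) 1

def Ehat (σ : ↥(orderIdeals P) →₀ ℕ) : Option (Fin m) →₀ ℕ :=
  σ.sum fun S e => e • W (S : Finset (Fin m))

def deg (σ : ↥(orderIdeals P) →₀ ℕ) : ℕ := σ.sum fun _ e => e

def Qm (σ : ↥(orderIdeals P) →₀ ℕ) : ℕ :=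
  σ.sum fun S e => e * ((S : Finset (Fin m)).card) ^ 2

def ChainS (σ : ↥(orderIdeals P) →₀ ℕ) : Prop :=
  ∀ S ∈ σ.support, ∀ T ∈ σ.support,
    (S : Finset (Fin m)) ⊆ (T : Finset (Fin m)) ∨ (T : Finset (Fin m)) ⊆ (S : Finset (Fin m))

lemma Ehat_add (σ τ : ↥(orderIdeals P) →₀ ℕ) : Ehat (σ + τ) = Ehat σ + Ehat τ := by
  unfold Ehat
  refine Finsupp.sum_add_index' (fun a => ?_) (fun a b₁ b₂ => ?_)
  · simp
  · simp [add_smul]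

lemma Ehat_single (S : ↥(orderIdeals P)) (e : ℕ) :
    Ehat (Finsupp.single S e) = e • W (S : Finset (Fin m)) := by
  unfold Ehat
  exact Finsupp.sum_single_index (by simp)

lemma deg_add (σ τ : ↥(orderIdeals P) →₀ ℕ) : deg (σ + τ) = deg σ + deg τ := by
  unfold deg
  exact Finsupp.sum_add_index' (fun a => rfl) (fun a b₁ b₂ => rfl)

lemma deg_single (S : ↥(orderIdeals P)) (e : ℕ) : deg (Finsupp.single S e) = e := by
  unfold deg
  exact Finsupp.sum_single_index rfl

lemma Qm_add (σ τ : ↥(orderIdeals P) →₀ ℕ) : Qm (σ + τ) = Qm σ + Qm τ := by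
  unfold Qm
  exact Finsupp.sum_add_index' (fun a => by simp) (fun a b₁ b₂ => by ring)

lemma Qm_single (S : ↥(orderIdeals P)) (e : ℕ) :
    Qm (Finsupp.single S e) = e * ((S : Finset (Fin m)).card) ^ 2 := by
  unfold Qm
  exact Finsupp.sum_single_index (by simp)

lemma Qm_le (σ : ↥(orderIdeals P) →₀ ℕ) : Qm σ ≤ deg σ * m ^ 2 := by
  unfold Qm deg
  rw [Finsupp.sum, Finsupp.sum, Finset.sum_mul]
  refine Finset.sum_le_sum fun S _ => ?_
  have : (S : Finset (Fin m)).card ≤ m := by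
    simpa using Finset.card_le_univ (S : Finset (Fin m))
  exact Nat.mul_le_mul_left _ (Nat.pow_le_pow_left this 2)

lemma W_add_W {S T : Finset (Fin m)} :
    W S + W T = W (S ∩ T) + W (S ∪ T) := by
  classical
  unfold W
  have h := Finset.sum_union_inter (s₁ := S) (s₂ := T)
    (f := fun i => Finsupp.single (some i) (1 : ℕ))
  ext a
  have ha := congrArg (fun f : Option (Fin m) →₀ ℕ => f a) h
  simp only [Finsupp.add_apply] at ha ⊢
  omega

lemma Ehat_none (σ : ↥(orderIdeals P) →₀ ℕ) : Ehat σ none = deg σ := by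
  unfold Ehat deg
  rw [Finsupp.sum_apply, Finsupp.sum, Finsupp.sum]
  refine Finset.sum_congr rfl fun S _ => ?_
  simp [W, Finsupp.single_apply]

lemma W_some (S : Finset (Fin m)) (i : Fin m) :
    W S (some i) = if i ∈ S then 1 else 0 := by
  classical
  unfold W
  rw [Finsupp.add_apply, Finsupp.single_apply, Finset.sum_apply']
  simp [Finsupp.single_apply]

lemma Ehat_some (σ : ↥(orderIdeals P) →₀ ℕ) (i : Fin m) :
    Ehat σ (some i) = σ.sum fun S e => if i ∈ (S : Finset (Fin m)) then e else 0 := by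
  unfold Ehat
  rw [Finsupp.sum_apply]
  refine Finset.sum_congr rfl fun S _ => ?_
  simp only [Finsupp.smul_apply, W_some, smul_eq_mul]
  split <;> simp

/-- a chain-supported exponent has a maximal support element (when nonzero) -/
lemma exists_max (σ : ↥(orderIdeals P) →₀ ℕ) (hc : ChainS σ) (hne : σ.support.Nonempty) :
    ∃ S ∈ σ.support, ∀ T ∈ σ.support, (T : Finset (Fin m)) ⊆ (S : Finset (Fin m)) := by
  obtain ⟨S, hS, hmax⟩ := Finset.exists_max_image σ.support
    (fun S => ((S : ↥(orderIdeals P)) : Finset (Fin m)).card) hne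
  refine ⟨S, hS, fun T hT => ?_⟩
  rcases hc S hS T hT with h | h
  · have := hmax T hT
    have : (S : Finset (Fin m)) = (T : Finset (Fin m)) :=
      Finset.eq_of_subset_of_card_le h this
    rw [← this]
  · exact h

lemma deg_eq_zero_iff (σ : ↥(orderIdeals P) →₀ ℕ) : deg σ = 0 ↔ σ = 0 := by
  constructor
  · intro h
    ext S
    simp only [Finsupp.coe_zero, Pi.zero_apply]
    by_contra hS
    have hmem : S ∈ σ.support := Finsupp.mem_support_iff.mpr hS
    have hle : σ S ≤ ∑ T ∈ σ.support, σ T :=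
      Finset.single_le_sum (fun _ _ => Nat.zero_le _) hmem
    have h0 : ∑ T ∈ σ.support, σ T = 0 := by simpa [deg, Finsupp.sum] using h
    omega
  · intro h; subst h; simp [deg]

/-- injectivity of `Ehat` on chain-supported exponents -/
lemma ehat_inj : ∀ d (σ τ : ↥(orderIdeals P) →₀ ℕ), deg σ = d → ChainS σ → ChainS τ →
    Ehat σ = Ehat τ → σ = τ := by
  intro d
  induction d with
  | zero =>
    intro σ τ hd _ _ hE
    have hτ : deg τ = 0 := by rw [← Ehat_none, ← hE, Ehat_none, hd]
    rw [(deg_eq_zero_iff σ).mp hd, (deg_eq_zero_iff τ).mp hτ]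
  | succ n ih =>
    intro σ τ hd hcσ hcτ hE
    have hdτ : deg τ = n + 1 := by rw [← Ehat_none, ← hE, Ehat_none, hd]
    have hσne : σ.support.Nonempty := by
      rw [Finsupp.support_nonempty_iff]
      intro h; rw [h] at hd; simp [deg] at hd
    have hτne : τ.support.Nonempty := by
      rw [Finsupp.support_nonempty_iff]
      intro h; rw [h] at hdτ; simp [deg] at hdτ
    obtain ⟨S, hS, hSmax⟩ := exists_max σ hcσ hσne
    obtain ⟨T, hT, hTmax⟩ := exists_max τ hcτ hτne
    -- characterize max via Ehat
    have key : ∀ (ρ : ↥(orderIdeals P) →₀ ℕ) (R : ↥(orderIdeals P)), R ∈ ρ.support →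
        (∀ T' ∈ ρ.support, (T' : Finset (Fin m)) ⊆ (R : Finset (Fin m))) →
        ∀ i : Fin m, (Ehat ρ (some i) ≠ 0 ↔ i ∈ (R : Finset (Fin m))) := by
      intro ρ R hR hRmax i
      rw [Ehat_some, Finsupp.sum]
      constructor
      · intro h
        obtain ⟨T', hT', hval⟩ : ∃ T' ∈ ρ.support,
            (if i ∈ (T' : Finset (Fin m)) then ρ T' else 0) ≠ 0 := by
          by_contra hcon
          push_neg at hcon
          exact h (Finset.sum_eq_zero hcon)
        have : i ∈ (T' : Finset (Fin m)) := by by_contra h'; simp [h'] at hval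
        exact hRmax T' hT' this
      · intro hi hzero
        have h0 := Finset.sum_eq_zero_iff.mp hzero R hR
        rw [if_pos hi] at h0
        exact Finsupp.mem_support_iff.mp hR h0
    have hST : S = T := by
      have h1 := key σ S hS hSmax
      have h2 := key τ T hT hTmax
      have : (S : Finset (Fin m)) = (T : Finset (Fin m)) := by
        ext i
        rw [← h1 i, ← h2 i, hE]
      exact Subtype.ext this
    subst hST
    -- peel one copy of S
    have hσS : 1 ≤ σ S := Nat.one_le_iff_ne_zero.mpr (Finsupp.mem_support_iff.mp hS)
    have hτS : 1 ≤ τ S := Nat.one_le_iff_ne_zero.mpr (Finsupp.mem_support_iff.mp hT)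
    set σ' := σ - Finsupp.single S 1 with hσ'
    set τ' := τ - Finsupp.single S 1 with hτ'
    have hσdec : σ = σ' + Finsupp.single S 1 := by
      ext R
      simp only [hσ', Finsupp.add_apply, Finsupp.tsub_apply, Finsupp.single_apply]
      by_cases h : S = R
      · subst h; simp; omega
      · simp [h]
    have hτdec : τ = τ' + Finsupp.single S 1 := by
      ext R
      simp only [hτ', Finsupp.add_apply, Finsupp.tsub_apply, Finsupp.single_apply]
      by_cases h : S = R
      · subst h; simp; omega
      · simp [h]
    have hsubσ : σ'.support ⊆ σ.support := by
      intro R hR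
      rw [Finsupp.mem_support_iff] at hR ⊢
      intro h
      apply hR
      simp only [hσ', Finsupp.tsub_apply, h]
      simp
    have hsubτ : τ'.support ⊆ τ.support := by
      intro R hR
      rw [Finsupp.mem_support_iff] at hR ⊢
      intro h
      apply hR
      simp only [hτ', Finsupp.tsub_apply, h]
      simp
    have hE' : Ehat σ' = Ehat τ' := by
      have e1 : Ehat σ = Ehat σ' + 1 • W (S : Finset (Fin m)) := by
        rw [hσdec, Ehat_add, Ehat_single]
      have e2 : Ehat τ = Ehat τ' + 1 • W (S : Finset (Fin m)) := by
        rw [hτdec, Ehat_add, Ehat_single]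
      have := e1 ▸ e2 ▸ hE
      exact add_right_cancel this
    have hd' : deg σ' = n := by
      have : deg σ = deg σ' + 1 := by rw [hσdec, deg_add, deg_single]
      omega
    have := ih σ' τ' hd' (fun A hA B hB => hcσ A (hsubσ hA) B (hsubσ hB))
      (fun A hA B hB => hcτ A (hsubτ hA) B (hsubτ hB)) hE'
    rw [hσdec, hτdec, this]

section Poly
variable {K : Type*} [CommRing K]

lemma X_eq_monomial {σ' : Type*} (n : σ') :
    (X n : MvPolynomial σ' K) = monomial (Finsupp.single n 1) 1 := rfl

lemma prod_monomial_one {α : Type*} (s : Finset α) (g : α → (Option (Fin m) →₀ ℕ)) :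
    (∏ i ∈ s, (monomial (g i) (1:K) : MvPolynomial (Option (Fin m)) K))
      = monomial (∑ i ∈ s, g i) 1 := by
  classical
  induction s using Finset.cons_induction with
  | empty => simp
  | cons a s ha ih => rw [Finset.prod_cons, Finset.sum_cons, ih, monomial_mul, one_mul]

lemma hibiParam_X_eq (S : ↥(orderIdeals P)) :
    ((X none : MvPolynomial (Option (Fin m)) K) * ∏ i ∈ (S : Finset (Fin m)), X (some i))
      = monomial (W (S : Finset (Fin m))) 1 := by
  have h : (∏ i ∈ (S : Finset (Fin m)), (X (some i) : MvPolynomial (Option (Fin m)) K))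
      = monomial (∑ i ∈ (S : Finset (Fin m)), Finsupp.single (some i) 1) 1 := by
    rw [← prod_monomial_one]
    exact Finset.prod_congr rfl fun i _ => X_eq_monomial (some i)
  rw [h, X_eq_monomial, monomial_mul, one_mul, W]

lemma hibiParam_monomial (σ : ↥(orderIdeals P) →₀ ℕ) (c : K) :
    hibiParam P K (monomial σ c) = monomial (Ehat σ) c := by
  unfold hibiParam
  rw [aeval_monomial]
  have h1 : (σ.prod fun S e =>
      ((X none : MvPolynomial (Option (Fin m)) K) * ∏ i ∈ (S : Finset (Fin m)), X (some i)) ^ e)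
      = monomial (Ehat σ) 1 := by
    unfold Finsupp.prod
    have h2 : ∀ S ∈ σ.support,
        ((X none : MvPolynomial (Option (Fin m)) K) * ∏ i ∈ (S : Finset (Fin m)), X (some i)) ^ σ S
          = monomial (σ S • W (S : Finset (Fin m))) 1 := by
      intro S _
      rw [hibiParam_X_eq, monomial_pow, one_pow]
    rw [Finset.prod_congr rfl h2, prod_monomial_one]
    rfl
  rw [h1, algebraMap_eq, C_mul_monomial, mul_one]

end Poly

end HibiAux

namespace HibiAux
section Straight
variable {m : ℕ} {P : PartialOrder (Fin m)} {K : Type*} [CommRing K]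

def hibiGens (P : PartialOrder (Fin m)) (K : Type*) [CommRing K] :
    Set (MvPolynomial (↥(orderIdeals P)) K) :=
  {f | ∃ S T : ↥(orderIdeals P),
    f = X S * X T -
      X (⟨(S : Finset (Fin m)) ∩ (T : Finset (Fin m)),
          orderIdeals_inter_mem P S.2 T.2⟩ : ↥(orderIdeals P)) *
      X (⟨(S : Finset (Fin m)) ∪ (T : Finset (Fin m)),
          orderIdeals_union_mem P S.2 T.2⟩ : ↥(orderIdeals P))}

lemma hibiParam_X' (S : ↥(orderIdeals P)) :
    hibiParam P K (X S) = monomial (W (S : Finset (Fin m))) 1 := by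
  rw [X_eq_monomial, hibiParam_monomial, Ehat_single, one_smul]

lemma hibiParam_gen_zero {f : MvPolynomial (↥(orderIdeals P)) K}
    (hf : f ∈ hibiGens P K) : hibiParam P K f = 0 := by
  obtain ⟨S, T, rfl⟩ := hf
  rw [map_sub, map_mul, map_mul, hibiParam_X', hibiParam_X', hibiParam_X', hibiParam_X',
    monomial_mul, monomial_mul, one_mul]
  have : W ((S : Finset (Fin m))) + W ((T : Finset (Fin m)))
      = W ((S : Finset (Fin m)) ∩ (T : Finset (Fin m)))
        + W ((S : Finset (Fin m)) ∪ (T : Finset (Fin m))) := W_add_W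
  rw [show W ((⟨(S : Finset (Fin m)) ∩ (T : Finset (Fin m)),
      orderIdeals_inter_mem P S.2 T.2⟩ : ↥(orderIdeals P)) : Finset (Fin m))
      = W ((S : Finset (Fin m)) ∩ (T : Finset (Fin m))) from rfl,
    show W ((⟨(S : Finset (Fin m)) ∪ (T : Finset (Fin m)),
      orderIdeals_union_mem P S.2 T.2⟩ : ↥(orderIdeals P)) : Finset (Fin m))
      = W ((S : Finset (Fin m)) ∪ (T : Finset (Fin m))) from rfl,
    ← this, sub_self]

lemma step (σ : ↥(orderIdeals P) →₀ ℕ) (hnc : ¬ ChainS σ) :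
    ∃ τ : ↥(orderIdeals P) →₀ ℕ, Ehat τ = Ehat σ ∧ deg τ = deg σ ∧ Qm σ < Qm τ ∧
      monomial σ (1:K) - monomial τ 1 ∈ Ideal.span (hibiGens P K) := by
  unfold ChainS at hnc
  push_neg at hnc
  obtain ⟨S, hS, T, hT, hST⟩ := hnc
  have hSsubT : ¬ (S : Finset (Fin m)) ⊆ (T : Finset (Fin m)) := hST.1
  have hTsubS : ¬ (T : Finset (Fin m)) ⊆ (S : Finset (Fin m)) := hST.2
  have hne : S ≠ T := fun h => hSsubT (by rw [h])
  set SiT : ↥(orderIdeals P) :=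
    ⟨(S : Finset (Fin m)) ∩ (T : Finset (Fin m)), orderIdeals_inter_mem P S.2 T.2⟩ with hSiT
  set SuT : ↥(orderIdeals P) :=
    ⟨(S : Finset (Fin m)) ∪ (T : Finset (Fin m)), orderIdeals_union_mem P S.2 T.2⟩ with hSuT
  have hσS : 1 ≤ σ S := Nat.one_le_iff_ne_zero.mpr (Finsupp.mem_support_iff.mp hS)
  have hσT : 1 ≤ σ T := Nat.one_le_iff_ne_zero.mpr (Finsupp.mem_support_iff.mp hT)
  set ρ : ↥(orderIdeals P) →₀ ℕ := σ - Finsupp.single S 1 - Finsupp.single T 1 with hρ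
  have hdec : σ = ρ + Finsupp.single S 1 + Finsupp.single T 1 := by
    ext R
    simp only [hρ, Finsupp.add_apply, Finsupp.tsub_apply, Finsupp.single_apply]
    by_cases h1 : S = R
    · subst h1
      have h2 : ¬ (T = S) := fun h => hne h.symm
      simp [h2]
      omega
    · by_cases h2 : T = R
      · subst h2; simp [h1]; omega
      · simp [h1, h2]
  refine ⟨ρ + Finsupp.single SiT 1 + Finsupp.single SuT 1, ?_, ?_, ?_, ?_⟩
  · rw [hdec]
    simp only [Ehat_add, Ehat_single, one_smul]
    rw [add_assoc, add_assoc]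
    congr 1
    have h1 : (W ((SiT : Finset (Fin m))) : Option (Fin m) →₀ ℕ)
        = W ((S : Finset (Fin m)) ∩ (T : Finset (Fin m))) := rfl
    have h2 : (W ((SuT : Finset (Fin m))) : Option (Fin m) →₀ ℕ)
        = W ((S : Finset (Fin m)) ∪ (T : Finset (Fin m))) := rfl
    rw [h1, h2, ← W_add_W]
  · rw [hdec]
    simp only [deg_add, deg_single]
  · rw [hdec]
    simp only [Qm_add, Qm_single, one_mul]
    have hcards : ((S : Finset (Fin m)) ∩ (T : Finset (Fin m))).card
        + ((S : Finset (Fin m)) ∪ (T : Finset (Fin m))).card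
        = (S : Finset (Fin m)).card + (T : Finset (Fin m)).card :=
      Finset.card_inter_add_card_union _ _
    have haS : ((S : Finset (Fin m)) ∩ (T : Finset (Fin m))).card < (S : Finset (Fin m)).card := by
      refine Finset.card_lt_card ?_
      rw [Finset.ssubset_iff_subset_ne]
      refine ⟨Finset.inter_subset_left, fun h => hSsubT ?_⟩
      rw [← h]
      exact Finset.inter_subset_right
    have haT : ((S : Finset (Fin m)) ∩ (T : Finset (Fin m))).card < (T : Finset (Fin m)).card := by
      refine Finset.card_lt_card ?_
      rw [Finset.ssubset_iff_subset_ne]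
      refine ⟨Finset.inter_subset_right, fun h => hTsubS ?_⟩
      rw [← h]
      exact Finset.inter_subset_left
    have hcard1 : ((SiT : Finset (Fin m))).card
        = ((S : Finset (Fin m)) ∩ (T : Finset (Fin m))).card := rfl
    have hcard2 : ((SuT : Finset (Fin m))).card
        = ((S : Finset (Fin m)) ∪ (T : Finset (Fin m))).card := rfl
    rw [hcard1, hcard2]
    have key : ∀ a u s t : ℕ, a + u = s + t → a < s → a < t →
        s ^ 2 + t ^ 2 < a ^ 2 + u ^ 2 := by
      intro a u s t h1 h2 h3
      obtain ⟨p, hp⟩ := Nat.exists_eq_add_of_lt h2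
      obtain ⟨q, hq⟩ := Nat.exists_eq_add_of_lt h3
      subst hp hq
      have hu : u = a + p + q + 2 := by omega
      subst hu
      ring_nf
      nlinarith
    have := key _ _ _ _ hcards haS haT
    linarith
  · have e1 : (monomial σ (1:K)) = monomial ρ 1 * (X S * X T) := by
      rw [hdec, X_eq_monomial, X_eq_monomial, monomial_mul, monomial_mul, one_mul, one_mul,
        add_assoc]
    have e2 : (monomial (ρ + Finsupp.single SiT 1 + Finsupp.single SuT 1) (1:K))
        = monomial ρ 1 * (X SiT * X SuT) := by
      rw [X_eq_monomial, X_eq_monomial, monomial_mul, monomial_mul, one_mul, one_mul, add_assoc]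
    rw [e1, e2, ← mul_sub]
    refine Ideal.mul_mem_left _ _ (Ideal.subset_span ?_)
    exact ⟨S, T, rfl⟩

lemma straighten : ∀ (n : ℕ) (σ : ↥(orderIdeals P) →₀ ℕ), deg σ * m ^ 2 ≤ Qm σ + n →
    ∃ τ, ChainS τ ∧ Ehat τ = Ehat σ ∧
      (monomial σ (1:K) - monomial τ 1) ∈ Ideal.span (hibiGens P K) := by
  intro n
  induction n with
  | zero =>
    intro σ hσ
    by_cases hc : ChainS σ
    · exact ⟨σ, hc, rfl, by simp⟩
    · exfalso
      obtain ⟨τ, hE, hdeg, hQ, _⟩ := step (K := K) σ hc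
      have := Qm_le τ
      rw [hdeg] at this
      omega
  | succ n ih =>
    intro σ hσ
    by_cases hc : ChainS σ
    · exact ⟨σ, hc, rfl, by simp⟩
    · obtain ⟨τ₀, hE, hdeg, hQ, hmem⟩ := step (K := K) σ hc
      obtain ⟨τ, hcτ, hEτ, hmem'⟩ := ih τ₀ (by rw [hdeg]; omega)
      refine ⟨τ, hcτ, by rw [hEτ, hE], ?_⟩
      have heq : (monomial σ (1:K) - monomial τ 1)
          = (monomial σ 1 - monomial τ₀ 1) + (monomial τ₀ 1 - monomial τ 1) := by ring
      rw [heq]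
      exact Ideal.add_mem _ hmem hmem'

end Straight
end HibiAux

namespace HibiAux
section Main
variable {m : ℕ} {P : PartialOrder (Fin m)} {K : Type*} [CommRing K]

lemma chain_kernel_zero (g : MvPolynomial (↥(orderIdeals P)) K)
    (hchain : ∀ ρ ∈ g.support, ChainS ρ) (h0 : hibiParam P K g = 0) : g = 0 := by
  by_contra hne
  have hsup : g.support ≠ ∅ := fun h => hne (MvPolynomial.support_eq_empty.mp h)
  obtain ⟨ρ₀, hρ₀⟩ := Finset.nonempty_of_ne_empty hsup
  have hcoeff : coeff (Ehat ρ₀) (hibiParam P K g) = g.coeff ρ₀ := by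
    have step1 : hibiParam P K g = ∑ σ ∈ g.support, monomial (Ehat σ) (g.coeff σ) := by
      conv_lhs => rw [g.as_sum]
      rw [map_sum]
      exact Finset.sum_congr rfl fun σ _ => hibiParam_monomial σ _
    rw [step1, MvPolynomial.coeff_sum]
    have step2 : (∑ σ ∈ g.support, coeff (Ehat ρ₀) (monomial (Ehat σ) (g.coeff σ)))
        = ∑ σ ∈ g.support, if Ehat σ = Ehat ρ₀ then g.coeff σ else 0 :=
      Finset.sum_congr rfl fun σ _ => coeff_monomial (Ehat ρ₀) (Ehat σ) (g.coeff σ)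
    rw [step2]
    refine (Finset.sum_eq_single_of_mem ρ₀ hρ₀ (fun σ hσ hne' => ?_)).trans (if_pos rfl)
    rw [if_neg]
    intro h
    exact hne' (ehat_inj (deg σ) σ ρ₀ rfl (hchain σ hσ) (hchain ρ₀ hρ₀) h)
  rw [h0, coeff_zero] at hcoeff
  exact Finsupp.mem_support_iff.mp hρ₀ hcoeff.symm

theorem ker_eq : RingHom.ker (hibiParam P K).toRingHom = Ideal.span (hibiGens P K) := by
  apply le_antisymm
  · intro f hf
    simp only [RingHom.mem_ker, AlgHom.toRingHom_eq_coe, RingHom.coe_coe] at hf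
    have hIker : Ideal.span (hibiGens P K) ≤ RingHom.ker (hibiParam P K).toRingHom := by
      rw [Ideal.span_le]
      intro x hx
      simp only [SetLike.mem_coe, RingHom.mem_ker, AlgHom.toRingHom_eq_coe, RingHom.coe_coe]
      exact hibiParam_gen_zero hx
    have hchoice : ∀ σ : ↥(orderIdeals P) →₀ ℕ, ∃ τ, ChainS τ ∧ Ehat τ = Ehat σ ∧
        (monomial σ (1:K) - monomial τ 1) ∈ Ideal.span (hibiGens P K) :=
      fun σ => straighten (deg σ * m ^ 2) σ (by omega)
    choose N hNc hNE hNmem using hchoice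
    set g : MvPolynomial (↥(orderIdeals P)) K :=
      ∑ σ ∈ f.support, monomial (N σ) (f.coeff σ) with hg
    have hfg : f - g ∈ Ideal.span (hibiGens P K) := by
      have hdecomp : f - g
          = ∑ σ ∈ f.support, (monomial σ (f.coeff σ) - monomial (N σ) (f.coeff σ)) := by
        rw [Finset.sum_sub_distrib, ← f.as_sum, hg]
      rw [hdecomp]
      refine Ideal.sum_mem _ fun σ _ => ?_
      have h2 : monomial σ (f.coeff σ) - monomial (N σ) (f.coeff σ)
          = C (f.coeff σ) * (monomial σ 1 - monomial (N σ) 1) := by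
        rw [mul_sub, C_mul_monomial, C_mul_monomial, mul_one]
      rw [h2]
      exact Ideal.mul_mem_left _ _ (hNmem σ)
    have hg0 : hibiParam P K g = 0 := by
      have h1 := hIker hfg
      simp only [RingHom.mem_ker, AlgHom.toRingHom_eq_coe, RingHom.coe_coe, map_sub] at h1
      rw [hf] at h1
      linear_combination -h1
    have hgsupp : ∀ ρ ∈ g.support, ChainS ρ := by
      intro ρ hρ
      have hρne : MvPolynomial.coeff ρ g ≠ 0 := MvPolynomial.mem_support_iff.mp hρ
      rw [hg] at hρne
      have : MvPolynomial.coeff ρ (∑ σ ∈ f.support, monomial (N σ) (f.coeff σ))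
          = ∑ σ ∈ f.support, if N σ = ρ then f.coeff σ else 0 := by
        rw [MvPolynomial.coeff_sum]
        exact Finset.sum_congr rfl fun σ _ => coeff_monomial ρ (N σ) (f.coeff σ)
      rw [this] at hρne
      obtain ⟨σ, hσ, hval⟩ : ∃ σ ∈ f.support, (if N σ = ρ then f.coeff σ else 0) ≠ 0 := by
        by_contra hcon
        push_neg at hcon
        exact hρne (Finset.sum_eq_zero hcon)
      have : N σ = ρ := by by_contra h; simp [h] at hval
      rw [← this]
      exact hNc σ
    have hgz : g = 0 := chain_kernel_zero g hgsupp hg0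
    have : f = f - g := by rw [hgz, sub_zero]
    rw [this]
    exact hfg
  · rw [Ideal.span_le]
    intro x hx
    simp only [SetLike.mem_coe, RingHom.mem_ker, AlgHom.toRingHom_eq_coe, RingHom.coe_coe]
    exact hibiParam_gen_zero hx

end Main
end HibiAux

/-- Hibi'"'"'s theorem: the kernel of the Hibi parametrization of the distributive lattice
`L = J(P)` is the Hibi ideal `⟨p_S p_T - p_{S∩T} p_{S∪T} : S, T ∈ L⟩`. -/
theorem ker_hibiParam_eq_hibiIdeal
    (m : ℕ) (P : PartialOrder (Fin m)) (K : Type*) [Field K] :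
    RingHom.ker (hibiParam P K).toRingHom =
      Ideal.span {f : MvPolynomial (↥(orderIdeals P)) K |
        ∃ S T : ↥(orderIdeals P),
          f = X S * X T -
            X (⟨(S : Finset (Fin m)) ∩ (T : Finset (Fin m)),
                orderIdeals_inter_mem P S.2 T.2⟩ : ↥(orderIdeals P)) *
            X (⟨(S : Finset (Fin m)) ∪ (T : Finset (Fin m)),
                orderIdeals_union_mem P S.2 T.2⟩ : ↥(orderIdeals P))} :=
  HibiAux.ker_eq

end
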